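/- Let ρ₁, ρ₂ : G → ℝ≥0 be proper functions on a countable set G with (1/C)·ρ₁(g) ≤ ρ₂(g) ≤ C·ρ₁(g) for some C ≥ 1 and all g. Suppose there is d>0 with liminf_{R→∞}|{g : ρ₁(g) ≤ R}|/R^d > 0, and X ⊆ G satisfies lim_{R→∞}|{g ∈ X : ρ₁(g) ≤ R}|/R^d = 0. Then G \ X is generic with respect to ρ₂. -/

import Mathlib

open Filter

private lemma aux_mul_atTop (c : NNReal) (hc : c ≠ 0) :
    Tendsto (fun R : NNReal => c * R) atTop atTop := by
  apply tendsto_atTop_atTop.mpr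
  intro b
  refine ⟨c⁻¹ * b, fun a ha => ?_⟩
  calc b = c * (c⁻¹ * b) := by rw [← mul_assoc, mul_inv_cancel₀ hc, one_mul]
  _ ≤ c * a := by exact mul_le_mul_right ha c

/-- If `ρ₁, ρ₂ : G → ℝ≥0` are proper and comparable,
`(1/C)·ρ₁ ≤ ρ₂ ≤ C·ρ₁` with `C ≥ 1`, `liminf |{ρ₁ ≤ R}|/R^d > 0`, and
`lim |{g ∈ X : ρ₁(g) ≤ R}|/R^d = 0`, then `G \ X` is `ρ₂`-generic. -/
theorem stmt3 {G : Type*} [Countable G] (ρ₁ ρ₂ : G → NNReal)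
    (hproper₁ : ∀ R : NNReal, {g : G | ρ₁ g ≤ R}.Finite)
    (hproper₂ : ∀ R : NNReal, {g : G | ρ₂ g ≤ R}.Finite)
    (C : NNReal) (hC : 1 ≤ C)
    (hcomp : ∀ g : G, C⁻¹ * ρ₁ g ≤ ρ₂ g ∧ ρ₂ g ≤ C * ρ₁ g)
    (d : ℝ) (hd : 0 < d) (X : Set G)
    (hliminf : 0 < Filter.liminf
      (fun R : NNReal => ({g : G | ρ₁ g ≤ R}.ncard : ℝ) / (R : ℝ) ^ d) atTop)
    (hXzero : Tendsto
      (fun R : NNReal => (({g : G | g ∈ X ∧ ρ₁ g ≤ R}).ncard : ℝ) / (R : ℝ) ^ d)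
      atTop (nhds 0)) :
    Tendsto
      (fun R : NNReal =>
        (({g : G | g ∉ X ∧ ρ₂ g ≤ R}).ncard : ℝ) / ({g : G | ρ₂ g ≤ R}.ncard : ℝ))
      atTop (nhds 1) := by
  have hC0 : (C : NNReal) ≠ 0 := by positivity
  have hCpos : (0:ℝ) < (C:ℝ) := by exact_mod_cast hC0.bot_lt
  -- get L
  obtain ⟨L, hL0, hLlt⟩ := exists_between hliminf
  have hbdd : IsBoundedUnder (· ≥ ·) (atTop : Filter NNReal)
      (fun R : NNReal => ({g : G | ρ₁ g ≤ R}.ncard : ℝ) / (R : ℝ) ^ d) :=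
    isBoundedUnder_of ⟨0, fun R => by positivity⟩
  have hevL : ∀ᶠ R : NNReal in atTop,
      L < ({g : G | ρ₁ g ≤ R}.ncard : ℝ) / (R : ℝ) ^ d :=
    eventually_lt_of_lt_liminf hLlt hbdd
  have htendinv : Tendsto (fun R : NNReal => C⁻¹ * R) atTop atTop :=
    aux_mul_atTop C⁻¹ (by positivity)
  have htendC : Tendsto (fun R : NNReal => C * R) atTop atTop :=
    aux_mul_atTop C hC0
  -- eventual lower bound for N₁ at C⁻¹ R
  have hevL' : ∀ᶠ R : NNReal in atTop,
      L < ({g : G | ρ₁ g ≤ C⁻¹ * R}.ncard : ℝ) / ((C⁻¹ * R : NNReal) : ℝ) ^ d :=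
    htendinv.eventually hevL
  have hevpos : ∀ᶠ R : NNReal in atTop, (0:NNReal) < R := eventually_gt_atTop 0
  -- inclusions
  have hsub1 : ∀ R : NNReal, {g : G | ρ₁ g ≤ C⁻¹ * R} ⊆ {g : G | ρ₂ g ≤ R} := by
    intro R g hg
    simp only [Set.mem_setOf_eq] at hg ⊢
    calc ρ₂ g ≤ C * ρ₁ g := (hcomp g).2
    _ ≤ C * (C⁻¹ * R) := mul_le_mul_right hg C
    _ = R := by rw [← mul_assoc, mul_inv_cancel₀ hC0, one_mul]
  have hsub2 : ∀ R : NNReal,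
      {g : G | g ∈ X ∧ ρ₂ g ≤ R} ⊆ {g : G | g ∈ X ∧ ρ₁ g ≤ C * R} := by
    intro R g hg
    refine ⟨hg.1, ?_⟩
    have h1 : C⁻¹ * ρ₁ g ≤ R := le_trans (hcomp g).1 hg.2
    calc ρ₁ g = C * (C⁻¹ * ρ₁ g) := by rw [← mul_assoc, mul_inv_cancel₀ hC0, one_mul]
    _ ≤ C * R := mul_le_mul_right h1 C
  -- the X part over ρ₂ tends to zero relative to N₂
  have hXtend : Tendsto
      (fun R : NNReal => ({g : G | g ∈ X ∧ ρ₂ g ≤ R}.ncard : ℝ) /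
        ({g : G | ρ₂ g ≤ R}.ncard : ℝ)) atTop (nhds 0) := by
    set K : ℝ := ((C:ℝ)^2) ^ d / L with hK
    have hg0 : Tendsto (fun R : NNReal =>
        K * (({g : G | g ∈ X ∧ ρ₁ g ≤ C * R}.ncard : ℝ) / ((C * R : NNReal) : ℝ) ^ d))
        atTop (nhds 0) := by
      have := (htendC.comp tendsto_id).eventually (p := fun _ => True)
      have h := hXzero.comp htendC
      simpa using h.const_mul K
    refine squeeze_zero' (Eventually.of_forall fun R => by positivity) ?_ hg0
    filter_upwards [hevL', hevpos] with R hR hRpos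
    set x2 : ℝ := ({g : G | g ∈ X ∧ ρ₂ g ≤ R}.ncard : ℝ)
    set n2 : ℝ := ({g : G | ρ₂ g ≤ R}.ncard : ℝ)
    set n1 : ℝ := ({g : G | ρ₁ g ≤ C⁻¹ * R}.ncard : ℝ)
    set x1 : ℝ := ({g : G | g ∈ X ∧ ρ₁ g ≤ C * R}.ncard : ℝ)
    have hRr : (0:ℝ) < (R:ℝ) := by exact_mod_cast hRpos
    have hrpowpos : (0:ℝ) < ((C⁻¹ * R : NNReal) : ℝ) ^ d := by
      apply Real.rpow_pos_of_pos
      push_cast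
      positivity
    have hn1L : L * ((C⁻¹ * R : NNReal) : ℝ) ^ d < n1 := by
      rw [← lt_div_iff₀ hrpowpos]; exact hR
    have hn1pos : (0:ℝ) < n1 := lt_trans (by positivity) hn1L
    have hn2ge : n1 ≤ n2 :=
      Nat.cast_le.mpr (Set.ncard_le_ncard (hsub1 R) (hproper₂ R))
    have hn2pos : (0:ℝ) < n2 := lt_of_lt_of_le hn1pos hn2ge
    have hx2le : x2 ≤ x1 :=
      Nat.cast_le.mpr (Set.ncard_le_ncard (hsub2 R) ((hproper₁ (C*R)).subset
        (fun g hg => hg.2)))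
    have hden : L * ((C⁻¹ * R : NNReal) : ℝ) ^ d ≤ n2 :=
      le_trans hn1L.le hn2ge
    calc x2 / n2 ≤ x1 / (L * ((C⁻¹ * R : NNReal) : ℝ) ^ d) := by
          apply div_le_div₀ (by positivity) hx2le (by positivity) hden
    _ = K * (x1 / ((C * R : NNReal) : ℝ) ^ d) := by
          have hcr : ((C * R : NNReal) : ℝ) ^ d
              = ((C:ℝ)^2) ^ d * ((C⁻¹ * R : NNReal) : ℝ) ^ d := by
            rw [← Real.mul_rpow (by positivity) (by push_cast; positivity)]
            congr 1
            push_cast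
            field_simp
          rw [hcr, hK]
          have h1 : ((C:ℝ)^2) ^ d ≠ 0 := by positivity
          have h2 : ((C⁻¹ * R : NNReal) : ℝ) ^ d ≠ 0 := ne_of_gt hrpowpos
          field_simp
  -- rewrite the target as 1 - ratio
  have hcongr : ∀ᶠ R : NNReal in atTop,
      1 - ({g : G | g ∈ X ∧ ρ₂ g ≤ R}.ncard : ℝ) / ({g : G | ρ₂ g ≤ R}.ncard : ℝ)
      = ({g : G | g ∉ X ∧ ρ₂ g ≤ R}.ncard : ℝ) / ({g : G | ρ₂ g ≤ R}.ncard : ℝ) := by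
    filter_upwards [htendinv.eventually hevL, hevpos] with R hR hRpos
    have hsubX : {g : G | g ∈ X ∧ ρ₂ g ≤ R} ⊆ {g : G | ρ₂ g ≤ R} := fun g hg => hg.2
    have hdiff : {g : G | g ∉ X ∧ ρ₂ g ≤ R}
        = {g : G | ρ₂ g ≤ R} \ {g : G | g ∈ X ∧ ρ₂ g ≤ R} := by
      ext g; simp only [Set.mem_setOf_eq, Set.mem_diff]; tauto
    have hle : {g : G | g ∈ X ∧ ρ₂ g ≤ R}.ncard ≤ {g : G | ρ₂ g ≤ R}.ncard :=
      Set.ncard_le_ncard hsubX (hproper₂ R)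
    have hn2pos : (0:ℝ) < ({g : G | ρ₂ g ≤ R}.ncard : ℝ) := by
      have hrpowpos : (0:ℝ) < ((C⁻¹ * R : NNReal) : ℝ) ^ d := by
        apply Real.rpow_pos_of_pos; push_cast; positivity
      have hn1L : L * ((C⁻¹ * R : NNReal) : ℝ) ^ d
          < ({g : G | ρ₁ g ≤ C⁻¹ * R}.ncard : ℝ) := by
        rw [← lt_div_iff₀ hrpowpos]; exact hR
      have hn1pos : (0:ℝ) < ({g : G | ρ₁ g ≤ C⁻¹ * R}.ncard : ℝ) :=
        lt_trans (by positivity) hn1L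
      have : ({g : G | ρ₁ g ≤ C⁻¹ * R}.ncard : ℝ) ≤ ({g : G | ρ₂ g ≤ R}.ncard : ℝ) := by
        exact_mod_cast Set.ncard_le_ncard (hsub1 R) (hproper₂ R)
      linarith
    rw [hdiff, Set.ncard_diff hsubX ((hproper₂ R).subset hsubX), Nat.cast_sub hle,
      sub_div, div_self (ne_of_gt hn2pos)]
  have : Tendsto (fun R : NNReal =>
      1 - ({g : G | g ∈ X ∧ ρ₂ g ≤ R}.ncard : ℝ) / ({g : G | ρ₂ g ≤ R}.ncard : ℝ))
      atTop (nhds 1) := by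
    have := (tendsto_const_nhds (x := (1:ℝ)) (f := (atTop : Filter NNReal))).sub hXtend
    simpa using this
  exact this.congr' hcongr
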